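/- Let u : Ω → ℝ be a weakly differentiable function on a bounded open set Ω ⊂ ℝ^N such that u ∈ M^r(Ω) for some r > 0, and suppose there exist constants C > 0, ρ > 0, and p > 1 such that ∫_Ω |∇T_k(u)|^p dx ≤ C k^ρ for every k > 0, where T_k(s) = max(−k, min(k, s)). Then |∇u| ∈ M^{pr/(ρ+r)}(Ω), i.e. there is a constant C' with meas{|∇u| > λ} ≤ C'/λ^{pr/(ρ+r)} for all λ > 0. -/

import Mathlib

open MeasureTheory Real

/-!
Split `{l < |∇u|}` at a height `k` into `{k ≤ |u|}` and `{|u| ≤ k, l < |∇u|}`. The first piece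
has measure at most `Cr / k^r` by the Marcinkiewicz bound on `u`; on the second `|∇T_k u| > l`, so
Chebyshev's inequality and the energy bound give measure at most `C k^ρ / l^p`. Choosing
`k = l^{p/(ρ+r)}` balances the two terms, both becoming multiples of `l^{-pr/(ρ+r)}`.
-/

theorem setOf_lt_subset_union_truncation {α : Type*} {u G : α → ℝ} (k l : ℝ) :
    {x | l < G x} ⊆ {x | k ≤ |u x|} ∪ {x | |u x| ≤ k ∧ l < G x} := by
  intro x hx
  rcases le_total |u x| k with h | h
  · exact Or.inr ⟨h, hx⟩
  · exact Or.inl h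

section Truncation

variable {α : Type*} [MeasurableSpace α] {μ : Measure α} {u G : α → ℝ}

theorem mul_meas_le_lintegral_truncated_rpow (hu : Measurable u) (hG : Measurable G)
    {k l p : ℝ} (hl : 0 ≤ l) (hp : 0 ≤ p) :
    ENNReal.ofReal (l ^ p) * μ {x | |u x| ≤ k ∧ l < G x} ≤
      ∫⁻ x, ENNReal.ofReal ({y | |u y| ≤ k}.indicator (fun y => G y ^ p) x) ∂μ := by
  have hF : AEMeasurable
      (fun x => ENNReal.ofReal ({y | |u y| ≤ k}.indicator (fun y => G y ^ p) x)) μ :=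
    (ENNReal.measurable_ofReal.comp
      ((hG.pow_const p).indicator (hu.abs measurableSet_Iic))).aemeasurable
  refine le_trans (mul_le_mul_right (measure_mono fun x hx => ?_) _)
    (mul_meas_ge_le_lintegral₀ hF _)
  simp only [Set.mem_ofPred_eq, Set.indicator_of_mem (show x ∈ {y | |u y| ≤ k} from hx.1)]
  exact ENNReal.ofReal_le_ofReal (rpow_le_rpow hl hx.2.le hp)

theorem meas_le_of_lintegral_truncated_rpow_le (hu : Measurable u) (hG : Measurable G)
    {k l p C : ℝ} (hl : 0 < l) (hp : 0 ≤ p)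
    (hgrad : ∫⁻ x, ENNReal.ofReal ({y | |u y| ≤ k}.indicator (fun y => G y ^ p) x) ∂μ ≤
      ENNReal.ofReal C) :
    μ {x | |u x| ≤ k ∧ l < G x} ≤ ENNReal.ofReal (C / l ^ p) := by
  have hlp : 0 < l ^ p := rpow_pos_of_pos hl p
  rw [ENNReal.ofReal_div_of_pos hlp, ENNReal.le_div_iff_mul_le
    (Or.inl (ENNReal.ofReal_pos.2 hlp).ne') (Or.inl ENNReal.ofReal_ne_top), mul_comm]
  exact (mul_meas_le_lintegral_truncated_rpow hu hG hl.le hp).trans hgrad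

end Truncation

theorem rpow_div_add_rpow_eq {l : ℝ} (hl : 0 ≤ l) (p ρ r : ℝ) :
    (l ^ (p / (ρ + r))) ^ r = l ^ (p * r / (ρ + r)) := by
  rw [← rpow_mul hl, div_mul_eq_mul_div]

theorem rpow_div_add_rpow_div_rpow_eq_inv {l : ℝ} (hl : 0 < l) (p : ℝ) {ρ r : ℝ} (hρr : ρ + r ≠ 0) :
    (l ^ (p / (ρ + r))) ^ ρ / l ^ p = (l ^ (p * r / (ρ + r)))⁻¹ := by
  rw [← rpow_mul hl.le, ← rpow_sub hl, ← rpow_neg hl.le]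
  congr 1
  field_simp
  ring

theorem meas_lt_le_of_truncated_energy_le {α : Type*} [MeasurableSpace α] {μ : Measure α}
    {u G : α → ℝ} (hu : Measurable u) (hG : Measurable G) {r ρ p Cr C : ℝ}
    (hρr : ρ + r ≠ 0) (hp : 0 ≤ p) (hCr : 0 ≤ Cr) (hC : 0 ≤ C)
    (hM : ∀ k > (0 : ℝ), μ {x | k ≤ |u x|} ≤ ENNReal.ofReal (Cr / k ^ r))
    (hgrad : ∀ k > (0 : ℝ),
      ∫⁻ x, ENNReal.ofReal ({y | |u y| ≤ k}.indicator (fun y => G y ^ p) x) ∂μ ≤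
        ENNReal.ofReal (C * k ^ ρ))
    {l : ℝ} (hl : 0 < l) :
    μ {x | l < G x} ≤ ENNReal.ofReal ((Cr + C) / l ^ (p * r / (ρ + r))) := by
  set k := l ^ (p / (ρ + r))
  have hk : 0 < k := rpow_pos_of_pos hl _
  calc μ {x | l < G x}
      ≤ μ {x | k ≤ |u x|} + μ {x | |u x| ≤ k ∧ l < G x} :=
        (measure_mono (setOf_lt_subset_union_truncation k l)).trans (measure_union_le _ _)
    _ ≤ ENNReal.ofReal (Cr / k ^ r) + ENNReal.ofReal (C * k ^ ρ / l ^ p) :=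
        add_le_add (hM k hk) (meas_le_of_lintegral_truncated_rpow_le hu hG hl hp (hgrad k hk))
    _ = ENNReal.ofReal (Cr / k ^ r) + ENNReal.ofReal (C * (k ^ ρ / l ^ p)) := by
        rw [mul_div_assoc]
    _ = ENNReal.ofReal (Cr / l ^ (p * r / (ρ + r))) +
          ENNReal.ofReal (C / l ^ (p * r / (ρ + r))) := by
        rw [rpow_div_add_rpow_eq hl.le, rpow_div_add_rpow_div_rpow_eq_inv hl p hρr, div_eq_mul_inv C]
    _ = ENNReal.ofReal ((Cr + C) / l ^ (p * r / (ρ + r))) := by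
        rw [add_div, ENNReal.ofReal_add (by positivity) (by positivity)]

theorem stmt_2_general {N : ℕ} (Ω : Set (EuclideanSpace ℝ (Fin N)))
    (u : EuclideanSpace ℝ (Fin N) → ℝ) (g : EuclideanSpace ℝ (Fin N) → EuclideanSpace ℝ (Fin N))
    (hu : Measurable u) (hg : Measurable g)
    (r : ℝ) (hr : 0 < r) (Cr : ℝ) (hCr : 0 < Cr)
    (hM : ∀ k > (0 : ℝ), volume {x ∈ Ω | k ≤ |u x|} ≤ ENNReal.ofReal (Cr / k ^ r))
    (C ρ p : ℝ) (hC : 0 < C) (hρ : 0 < ρ) (hp : 1 < p)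
    (hgrad : ∀ k > (0 : ℝ),
      ∫⁻ x in Ω, ENNReal.ofReal (Set.indicator {y | |u y| ≤ k} (fun y => ‖g y‖ ^ p) x)
        ≤ ENNReal.ofReal (C * k ^ ρ)) :
    ∃ C' > (0 : ℝ), ∀ l > (0 : ℝ),
      volume {x ∈ Ω | l < ‖g x‖} ≤ ENNReal.ofReal (C' / l ^ (p * r / (ρ + r))) := by
  have hMΩ : ∀ k > (0 : ℝ), volume.restrict Ω {x | k ≤ |u x|} ≤ ENNReal.ofReal (Cr / k ^ r) :=
    fun k hk => by
      rw [Measure.restrict_apply (measurableSet_le measurable_const hu.abs), Set.inter_comm]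
      exact hM k hk
  refine ⟨Cr + C, add_pos hCr hC, fun l hl => ?_⟩
  calc volume {x ∈ Ω | l < ‖g x‖} = volume ({x | l < ‖g x‖} ∩ Ω) := by rw [Set.inter_comm]; rfl
    _ ≤ volume.restrict Ω {x | l < ‖g x‖} := Measure.le_restrict_apply _ _
    _ ≤ _ := meas_lt_le_of_truncated_energy_le hu hg.norm (add_pos hρ hr).ne'
        (by linarith) hCr.le hC.le hMΩ hgrad hl

/-- Marcinkiewicz regularity lemma: let `u : Ω → ℝ` with (weak) gradient `g`
on a bounded open `Ω ⊂ ℝ^N`, `u ∈ M^r(Ω)` for some `r > 0`, and suppose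
`∫_Ω |∇T_k(u)|^p ≤ C k^ρ` for every `k > 0` (here `∇T_k(u) = ∇u · χ_{{|u| ≤ k}}`).
Then `|∇u| ∈ M^{pr/(ρ+r)}(Ω)`. -/
theorem stmt_2 {N : ℕ} (Ω : Set (EuclideanSpace ℝ (Fin N))) (hΩopen : IsOpen Ω)
    (hΩbd : Bornology.IsBounded Ω)
    (u : EuclideanSpace ℝ (Fin N) → ℝ) (g : EuclideanSpace ℝ (Fin N) → EuclideanSpace ℝ (Fin N))
    (hu : Measurable u) (hg : Measurable g)
    (r : ℝ) (hr : 0 < r) (Cr : ℝ) (hCr : 0 < Cr)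
    (hM : ∀ k > (0 : ℝ), volume {x ∈ Ω | k ≤ |u x|} ≤ ENNReal.ofReal (Cr / k ^ r))
    (C ρ p : ℝ) (hC : 0 < C) (hρ : 0 < ρ) (hp : 1 < p)
    (hgrad : ∀ k > (0 : ℝ),
      ∫⁻ x in Ω, ENNReal.ofReal (Set.indicator {y | |u y| ≤ k} (fun y => ‖g y‖ ^ p) x)
        ≤ ENNReal.ofReal (C * k ^ ρ)) :
    ∃ C' > (0 : ℝ), ∀ l > (0 : ℝ),
      volume {x ∈ Ω | l < ‖g x‖} ≤ ENNReal.ofReal (C' / l ^ (p * r / (ρ + r))) :=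
  stmt_2_general Ω u g hu hg r hr Cr hCr hM C ρ p hC hρ hp hgrad
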